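/- arXiv:math-ph/9907014 — 2 statements merged into one kernel-verified Lean document; each statement's English description precedes it below -/
import Mathlib

section
/- Let A ≥ 1, N ≥ 1, M be natural numbers and let n ∈ D(A,N,M), i.e. n | N and N | M·n. Then N(A, N, M, n) = N(A, n, M·n/N, n): the number of cycles of order n among strings of length N with sum M equals the number of cycles of order n among strings of length n with sum M·n/N. Equivalently, the number of strings of length N with sum M whose cyclic-shift orbit has size exactly n equals the number of strings of length n with sum M·n/N whose cyclic-shift orbit has size exactly n. If n ∤ N or N ∤ M·n, then there are no strings of length N with sum M and orbit size n. -/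
/-!
A string whose shift orbit has size `n` is `n`-periodic, so it is the periodic extension of its
first `n` letters. For `n ∣ N`, periodic extension from length `n` to length `N` is injective,
commutes with the shift (hence preserves minimal periods and maps orbits onto orbits) and
multiplies the sum by `N / n`. It therefore maps the strings, and the orbits, of length `n`,
sum `M·n/N` and orbit size `n` bijectively onto those of length `N`, sum `M` and orbit size `n`.
-/

/-- The cyclic shift operator: `(shift a) i = a (i - 1 mod N)`. -/
def shift {A N : ℕ} (a : Fin N → Fin A) : Fin N → Fin A :=
  fun i => a ⟨((i : ℕ) + (N - 1)) % N, Nat.mod_lt _ i.pos⟩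

/-- The orbit of a string under iterated cyclic shifts. -/
def orbit {A N : ℕ} (a : Fin N → Fin A) : Set (Fin N → Fin A) :=
  {b | ∃ k : ℕ, shift^[k] a = b}

/-- The order of the cycle generated by `a`: the size of its shift orbit. -/
noncomputable def orbitSize {A N : ℕ} (a : Fin N → Fin A) : ℕ :=
  (orbit a).ncard

/-- The sum of the entries of a string. -/
def strSum {A N : ℕ} (a : Fin N → Fin A) : ℕ := ∑ i, (a i : ℕ)

/-- `|S(A,N,M)|`: the number of strings of length `N` over `{0,…,A-1}` with sum `M`. -/
noncomputable def Scard (A N M : ℕ) : ℕ :=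
  Set.ncard {a : Fin N → Fin A | strSum a = M}

/-- `M(A,N,M,n)`: the number of strings of length `N` over `{0,…,A-1}` with sum `M`
whose orbit has size exactly `n`. -/
noncomputable def Mcount (A N M n : ℕ) : ℕ :=
  Set.ncard {a : Fin N → Fin A | strSum a = M ∧ orbitSize a = n}

/-- `N(A,N,M,n)`: the number of cycles (shift orbits) of size exactly `n` among strings
of length `N` over `{0,…,A-1}` with sum `M`. -/
noncomputable def Ncount (A N M n : ℕ) : ℕ :=
  Set.ncard {o : Set (Fin N → Fin A) | ∃ a, strSum a = M ∧ orbitSize a = n ∧ o = orbit a}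

open Function Fin.CommRing

section Shift

variable {A N : ℕ} [NeZero N]

theorem shift_apply (a : Fin N → Fin A) (i : Fin N) : shift a i = a (i - 1) := by
  unfold shift
  congr 1
  ext
  rw [Fin.sub_def]
  change ((i : ℕ) + (N - 1)) % N = (N - 1 % N + i) % N
  rcases (NeZero.one_le : 1 ≤ N).eq_or_lt with rfl | h
  · simp
  · rw [Nat.mod_eq_of_lt h, Nat.add_comm]

theorem iterate_shift_apply (a : Fin N → Fin A) (k : ℕ) (i : Fin N) :
    shift^[k] a i = a (i - k) := by
  induction k generalizing i with
  | zero => simp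
  | succ k ih =>
    rw [iterate_succ_apply', shift_apply, ih]
    congr 1
    push_cast
    ring

theorem isPeriodicPt_shift_iff {a : Fin N → Fin A} {k : ℕ} :
    IsPeriodicPt shift k a ↔ ∀ i : Fin N, a (i + k) = a i := by
  refine ⟨fun h i => ?_, fun h => funext fun i => ?_⟩
  · rw [← congrFun h (i + k), iterate_shift_apply, add_sub_cancel_right]
  · rw [iterate_shift_apply, ← h (i - k), sub_add_cancel]

theorem isPeriodicPt_shift_length (a : Fin N → Fin A) : IsPeriodicPt shift N a :=
  isPeriodicPt_shift_iff.2 fun i => by simp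

theorem minimalPeriod_shift_dvd_length (a : Fin N → Fin A) : minimalPeriod shift a ∣ N :=
  (isPeriodicPt_shift_length a).minimalPeriod_dvd

theorem orbitSize_eq_minimalPeriod (a : Fin N → Fin A) :
    orbitSize a = minimalPeriod shift a := by
  have hpos : 0 < minimalPeriod shift a :=
    (isPeriodicPt_shift_length a).minimalPeriod_pos (Nat.pos_of_neZero N)
  have horbit : orbit a = (shift^[·] a) '' Set.Iio (minimalPeriod shift a) := by
    refine (Set.image_subset_range _ _).antisymm' ?_
    rintro _ ⟨k, rfl⟩
    exact ⟨k % _, Nat.mod_lt _ hpos, iterate_mod_minimalPeriod_eq⟩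
  rw [orbitSize, horbit, iterate_injOn_Iio_minimalPeriod.ncard_image,
    ← Finset.coe_Iio, Set.ncard_coe_finset, Nat.card_Iio]

end Shift

section PeriodicExt

variable {A N n : ℕ} [NeZero n]

def periodicExt (N : ℕ) (b : Fin n → Fin A) : Fin N → Fin A :=
  fun i => b (i : ℕ)

theorem periodicExt_injective (h : n ≤ N) :
    Injective (periodicExt N : (Fin n → Fin A) → Fin N → Fin A) := by
  intro b c hbc
  funext j
  simpa [periodicExt] using congrFun hbc (Fin.castLE h j)

theorem natCast_mod_of_dvd (hn : n ∣ N) (x : ℕ) : ((x % N : ℕ) : Fin n) = x := by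
  ext
  rw [Fin.val_natCast, Fin.val_natCast, Nat.mod_mod_of_dvd _ hn]

theorem natCast_val_sub_of_dvd (hn : n ∣ N) (i j : Fin N) :
    (((i - j : Fin N) : ℕ) : Fin n) = ((i : ℕ) : Fin n) - ((j : ℕ) : Fin n) := by
  rw [Fin.val_sub, natCast_mod_of_dvd hn, Nat.cast_add, Nat.cast_sub j.isLt.le,
    Fin.natCast_eq_zero.2 hn]
  ring

theorem shift_periodicExt [NeZero N] (hn : n ∣ N) (b : Fin n → Fin A) :
    shift (periodicExt N b) = periodicExt N (shift b) := by
  funext i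
  simp only [periodicExt, shift_apply]
  rw [natCast_val_sub_of_dvd hn, Fin.val_one', natCast_mod_of_dvd hn, Nat.cast_one]

theorem iterate_shift_periodicExt [NeZero N] (hn : n ∣ N) (k : ℕ) (b : Fin n → Fin A) :
    shift^[k] (periodicExt N b) = periodicExt N (shift^[k] b) :=
  (Semiconj.iterate_right (f := periodicExt N) (fun b => (shift_periodicExt hn b).symm) k b).symm

theorem orbit_periodicExt [NeZero N] (hn : n ∣ N) (b : Fin n → Fin A) :
    orbit (periodicExt N b) = periodicExt N '' orbit b := by
  ext a
  simp only [orbit, Set.mem_ofPred_eq, Set.mem_image, iterate_shift_periodicExt hn]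
  exact ⟨fun ⟨k, hk⟩ => ⟨_, ⟨k, rfl⟩, hk⟩, fun ⟨_, ⟨k, hk⟩, he⟩ => ⟨k, hk ▸ he⟩⟩

theorem minimalPeriod_periodicExt [NeZero N] (hn : n ∣ N) (b : Fin n → Fin A) :
    minimalPeriod shift (periodicExt N b) = minimalPeriod shift b :=
  minimalPeriod_eq_minimalPeriod_iff.2 fun k => by
    rw [IsPeriodicPt, IsFixedPt, iterate_shift_periodicExt hn,
      (periodicExt_injective (Nat.le_of_dvd (Nat.pos_of_neZero N) hn)).eq_iff]
    rfl

theorem strSum_periodicExt_mul (hn : n ∣ N) (b : Fin n → Fin A) :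
    strSum (periodicExt N b) * n = N * strSum b := by
  obtain ⟨q, rfl⟩ := hn
  have hblock : strSum (periodicExt (n * q) b) = q * strSum b := by
    -- index `Fin (n * q)` by `(block, position) ∈ Fin q × Fin n`
    rw [strSum, ← (finProdFinEquiv.trans (finCongr (mul_comm q n))).sum_comp,
      Fintype.sum_prod_type]
    simp [periodicExt, strSum]
  rw [hblock]
  ring

theorem periodicExt_comp_castLE [NeZero N] (h : n ≤ N) {a : Fin N → Fin A}
    (ha : IsPeriodicPt shift n a) : periodicExt N (a ∘ Fin.castLE h) = a := by
  funext i
  -- `i = i % n + n * (i / n)`, and `n * (i / n)` is a period of `a`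
  have hi : Fin.castLE h ((i : ℕ) : Fin n) + ((n * (i / n) : ℕ) : Fin N) = i := by
    have hlt : n * (i / n) < N := (Nat.mul_div_le i n).trans_lt i.isLt
    ext
    rw [Fin.val_add, Fin.val_castLE, Fin.val_natCast, Fin.val_natCast, Nat.mod_eq_of_lt hlt,
      Nat.mod_add_div, Nat.mod_eq_of_lt i.isLt]
  conv_rhs => rw [← hi, isPeriodicPt_shift_iff.1 (ha.mul_const (i / n))]
  rfl

end PeriodicExt

section Counting

variable {A N M n : ℕ}

theorem orbitSize_periodicExt [NeZero N] [NeZero n] (hn : n ∣ N) (b : Fin n → Fin A) :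
    orbitSize (periodicExt N b) = orbitSize b := by
  rw [orbitSize_eq_minimalPeriod, minimalPeriod_periodicExt hn, orbitSize_eq_minimalPeriod]

theorem orbitSize_dvd_and_dvd_strSum_mul [NeZero N] (a : Fin N → Fin A) :
    orbitSize a ∣ N ∧ N ∣ strSum a * orbitSize a := by
  rw [orbitSize_eq_minimalPeriod]
  have hn := minimalPeriod_shift_dvd_length a
  have : NeZero (minimalPeriod shift a) :=
    ⟨(Nat.pos_of_dvd_of_pos hn (Nat.pos_of_neZero N)).ne'⟩
  set b := a ∘ Fin.castLE (Nat.le_of_dvd (Nat.pos_of_neZero N) hn)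
  have ha : periodicExt N b = a := periodicExt_comp_castLE _ (isPeriodicPt_minimalPeriod shift a)
  refine ⟨hn, strSum b, ?_⟩
  rw [← strSum_periodicExt_mul hn b, ha]

theorem setOf_strSum_orbitSize_eq_image_periodicExt [NeZero N] [NeZero n] (hn : n ∣ N)
    (hM : N ∣ M * n) :
    {a : Fin N → Fin A | strSum a = M ∧ orbitSize a = n} =
      periodicExt N '' {b : Fin n → Fin A | strSum b = M * n / N ∧ orbitSize b = n} := by
  ext a
  constructor
  · rintro ⟨hsum, hsize⟩
    have hper : IsPeriodicPt shift n a := by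
      rw [← hsize, orbitSize_eq_minimalPeriod]
      exact isPeriodicPt_minimalPeriod shift a
    set b := a ∘ Fin.castLE (Nat.le_of_dvd (Nat.pos_of_neZero N) hn)
    have hb : periodicExt N b = a := periodicExt_comp_castLE _ hper
    refine ⟨b, ⟨?_, ?_⟩, hb⟩
    · rw [← hsum, ← hb, strSum_periodicExt_mul hn,
        Nat.mul_div_cancel_left _ (Nat.pos_of_neZero N)]
    · rw [← orbitSize_periodicExt hn, hb, hsize]
  · rintro ⟨b, ⟨hsum, hsize⟩, rfl⟩
    refine ⟨Nat.eq_of_mul_eq_mul_right (Nat.pos_of_neZero n) ?_, ?_⟩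
    · rw [strSum_periodicExt_mul hn, hsum, Nat.mul_div_cancel' hM]
    · rw [orbitSize_periodicExt hn, hsize]

theorem Ncount_eq_ncard_image_orbit (A N M n : ℕ) :
    Ncount A N M n = (orbit '' {a : Fin N → Fin A | strSum a = M ∧ orbitSize a = n}).ncard := by
  unfold Ncount
  congr 1
  ext o
  simp only [Set.mem_ofPred_eq, Set.mem_image, and_assoc, @eq_comm _ o]

end Counting

theorem stmt_7_general (A N M n : ℕ) (hN : 1 ≤ N) :
    (n ∣ N → N ∣ M * n →
      Ncount A N M n = Ncount A n (M * n / N) n ∧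
      Mcount A N M n = Mcount A n (M * n / N) n) ∧
    (¬ (n ∣ N ∧ N ∣ M * n) → Mcount A N M n = 0) := by
  have : NeZero N := ⟨by omega⟩
  refine ⟨fun hn hM => ?_, fun hnM => ?_⟩
  · have : NeZero n := ⟨(Nat.pos_of_dvd_of_pos hn hN).ne'⟩
    have hinj := periodicExt_injective (A := A) (Nat.le_of_dvd hN hn)
    have hset := setOf_strSum_orbitSize_eq_image_periodicExt (A := A) hn hM
    constructor
    · rw [Ncount_eq_ncard_image_orbit, Ncount_eq_ncard_image_orbit, hset, Set.image_image]
      simp only [orbit_periodicExt hn]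
      rw [← Set.image_image (Set.image _),
        Set.ncard_image_of_injective _ (Set.image_injective.2 hinj)]
    · rw [Mcount, Mcount, hset, Set.ncard_image_of_injective _ hinj]
  · rw [Mcount, Set.ncard_eq_zero, Set.eq_empty_iff_forall_notMem]
    rintro a ⟨rfl, rfl⟩
    exact hnM (orbitSize_dvd_and_dvd_strSum_mul a)

/-- If `n ∣ N` and `N ∣ M·n`, then `N(A,N,M,n) = N(A,n,M·n/N,n)` (the number of cycles of
order `n` among strings of length `N` with sum `M` equals the number of cycles of order `n`
among strings of length `n` with sum `M·n/N`), equivalently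
`M(A,N,M,n) = M(A,n,M·n/N,n)`; otherwise there are no strings of length `N` with sum `M`
and orbit size `n`. -/
theorem stmt_7 (A N M n : ℕ) (hA : 1 ≤ A) (hN : 1 ≤ N) :
    (n ∣ N → N ∣ M * n →
      Ncount A N M n = Ncount A n (M * n / N) n ∧
      Mcount A N M n = Mcount A n (M * n / N) n) ∧
    (¬ (n ∣ N ∧ N ∣ M * n) → Mcount A N M n = 0) :=
  stmt_7_general A N M n hN
end

section
/- For every natural number K ≥ 1, Δ_K equals μ(K), the Möbius function of K, where Δ_K is the number of even-length ordered factorizations of K into factors ≥ 2 minus the number of odd-length such factorizations. -/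
/-- `L` is an ordered factorization of `K` into factors `≥ 2`. -/
def IsOrderedFactorization (K : ℕ) (L : List ℕ) : Prop :=
  (∀ x ∈ L, 2 ≤ x) ∧ L.prod = K

/-- `Δ_K`: the number of even-length ordered factorizations of `K` into factors `≥ 2`
minus the number of odd-length such factorizations. -/
noncomputable def Delta (K : ℕ) : ℤ :=
  (Set.ncard {L : List ℕ | IsOrderedFactorization K L ∧ Even L.length} : ℤ) -
  (Set.ncard {L : List ℕ | IsOrderedFactorization K L ∧ Odd L.length} : ℤ)

/-!
Splitting off the first factor, a factorization of `K ≠ 1` is `K / m :: L` with `m` a proper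
divisor of `K` and `L` a factorization of `m`, which flips the sign of `(-1) ^ length`. Hence
`Δ_K = -∑_{m ∣ K, m < K} Δ_m`, i.e. `Δ * ζ = 1 = μ * ζ` in the ring of arithmetic functions,
so `Δ = μ`.
-/

open Finset ArithmeticFunction
open scoped ArithmeticFunction.zeta

theorem Finset.sum_neg_one_pow_eq_card_even_sub_card_odd {α : Type*} (s : Finset α) (f : α → ℕ) :
    ∑ x ∈ s, (-1 : ℤ) ^ f x = (#{x ∈ s | Even (f x)} : ℤ) - #{x ∈ s | Odd (f x)} := by
  simp_rw [← Nat.not_even_iff_odd]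
  rw [← sum_filter_add_sum_filter_not s (fun x => Even (f x)),
    sum_congr rfl fun x hx => (mem_filter.1 hx).2.neg_one_pow,
    sum_congr rfl fun x hx => (Nat.not_even_iff_odd.1 (mem_filter.1 hx).2).neg_one_pow]
  simp only [sum_const, nsmul_eq_mul, mul_one, mul_neg_one]
  ring

theorem isOrderedFactorization_one_iff {L : List ℕ} : IsOrderedFactorization 1 L ↔ L = [] := by
  refine ⟨fun ⟨hge, hprod⟩ => List.eq_nil_iff_forall_not_mem.2 fun x hx => ?_,
    by rintro rfl; simp [IsOrderedFactorization]⟩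
  have := Nat.eq_one_of_dvd_one (hprod ▸ List.dvd_prod hx)
  linarith [hge x hx]

def orderedFactorizations (K : ℕ) : Finset (List ℕ) :=
  if K = 1 then {[]} else
    K.properDivisors.attach.biUnion fun m =>
      (orderedFactorizations m).map ⟨(K / m :: ·), List.cons_injective⟩
decreasing_by exact (Nat.mem_properDivisors.1 m.2).2

theorem mem_orderedFactorizations {K : ℕ} {L : List ℕ} :
    L ∈ orderedFactorizations K ↔ IsOrderedFactorization K L := by
  induction K using Nat.strong_induction_on generalizing L with
  | _ K ih =>
  rw [orderedFactorizations]
  split_ifs with hK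
  · rw [hK, mem_singleton, isOrderedFactorization_one_iff]
  simp only [mem_biUnion, mem_attach, true_and, mem_map, Function.Embedding.coeFn_mk,
    Subtype.exists, Nat.mem_properDivisors]
  constructor
  · rintro ⟨m, ⟨⟨k, rfl⟩, hm⟩, L, hL, rfl⟩
    obtain ⟨hge, rfl⟩ := (ih m hm).1 hL
    have hm0 : 0 < L.prod := Nat.pos_of_ne_zero fun h => by simp [h] at hm
    have hk : 2 ≤ k := by
      by_contra! hk
      interval_cases k <;> simp at hm
    refine ⟨?_, ?_⟩
    · simpa [Nat.mul_div_cancel_left _ hm0, hk] using hge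
    · rw [List.prod_cons, Nat.mul_div_cancel_left _ hm0, mul_comm]
  · rintro ⟨hge, rfl⟩
    obtain _ | ⟨a, t⟩ := L
    · exact absurd List.prod_nil hK
    have ha : 2 ≤ a := hge a List.mem_cons_self
    have ht : ∀ x ∈ t, 2 ≤ x := fun x hx => hge x (List.mem_cons_of_mem a hx)
    have ht0 : 0 < t.prod := List.prod_pos fun x hx => by linarith [ht x hx]
    have hlt : t.prod < (a :: t).prod := by rw [List.prod_cons]; nlinarith
    refine ⟨t.prod, ⟨Dvd.intro_left a List.prod_cons.symm, hlt⟩, t, (ih _ hlt).2 ⟨ht, rfl⟩, ?_⟩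
    rw [List.prod_cons, Nat.mul_div_cancel _ ht0]

theorem Delta_eq_sum (K : ℕ) :
    Delta K = ∑ L ∈ orderedFactorizations K, (-1 : ℤ) ^ L.length := by
  rw [sum_neg_one_pow_eq_card_even_sub_card_odd, Delta, ← Set.ncard_coe_finset,
    ← Set.ncard_coe_finset]
  simp only [coe_filter, mem_orderedFactorizations]

theorem Delta_eq_neg_sum_properDivisors {K : ℕ} (hK : K ≠ 1) :
    Delta K = -∑ m ∈ K.properDivisors, Delta m := by
  rw [Delta_eq_sum, orderedFactorizations, if_neg hK, sum_biUnion, ← sum_attach K.properDivisors,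
    ← sum_neg_distrib]
  · refine sum_congr rfl fun m _ => ?_
    simp [Delta_eq_sum, pow_succ]
  · rintro ⟨m, hm⟩ - ⟨m', hm'⟩ - hne
    simp only [Function.onFun, disjoint_left, mem_map, Function.Embedding.coeFn_mk]
    rintro _ ⟨L, -, rfl⟩ ⟨L', -, hL⟩
    rw [Nat.mem_properDivisors] at hm hm'
    have hK0 : K ≠ 0 := by omega
    refine hne (Subtype.ext ?_)
    change m = m'
    rw [← Nat.div_div_self hm.1 hK0, ← Nat.div_div_self hm'.1 hK0, (List.cons_eq_cons.1 hL).1]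

theorem sum_divisors_Delta (K : ℕ) : ∑ d ∈ K.divisors, Delta d = if K = 1 then 1 else 0 := by
  rcases eq_or_ne K 0 with rfl | hK0
  · simp
  split_ifs with hK1
  · subst hK1
    rw [Nat.divisors_one, sum_singleton, Delta_eq_sum, orderedFactorizations]
    simp
  rw [← Nat.cons_self_properDivisors hK0, sum_cons, Delta_eq_neg_sum_properDivisors hK1,
    neg_add_cancel]

theorem Delta_zero : Delta 0 = 0 := by
  rw [Delta_eq_neg_sum_properDivisors zero_ne_one, Nat.properDivisors_zero, sum_empty, neg_zero]

theorem stmt_10_general (K : ℕ) :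
    Delta K = ArithmeticFunction.moebius K := by
  let D : ArithmeticFunction ℤ := ⟨Delta, Delta_zero⟩
  have hD : D * ζ = 1 := by
    ext n
    rw [coe_mul_zeta_apply, one_apply]
    exact sum_divisors_Delta n
  exact DFunLike.congr_fun (left_inv_eq_right_inv hD coe_zeta_mul_coe_moebius) K

/-- For every `K ≥ 1`, `Δ_K` equals the Möbius function `μ(K)`. -/
theorem stmt_10 (K : ℕ) (hK : 1 ≤ K) :
    Delta K = ArithmeticFunction.moebius K :=
  stmt_10_general K
end
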